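/- arXiv:1809.04312 — 5 statements merged into one kernel-verified Lean document; each statement's English description precedes it below -/
import Mathlib

section
/- Let k ≥ 3 be an integer, let A = {0,1}^k \ {0^k, 1^k}, define λ = (k^k + (-k/(k-1))^k)/((2k-2)^k - 2(k-2)^k + (-2)^k) and for a ∈ A define π(a) = (k-1)^k/((2k-2)^k - 2(k-2)^k + (-2)^k) · (1 - (-1/(k-1))^{d(a,0^k)}) · (1 - (-1/(k-1))^{d(a,1^k)}). Then ∑_{a∈A} π(a) = 1, π(a) ≥ 0 for all a ∈ A, and for every a* ∈ A, ∑_{a∈A} π(a)·(1/(k-1))^{d(a,a*)} = λ. -/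
/-!
Put `t = -1 / (k - 1)`. Since `d(a, 0^k) + d(a, 1^k) = k`, the weight `π a` is proportional to
`1 - t ^ d(a, 0^k) - t ^ d(a, 1^k) + t ^ k`, so every sum in the statement is a combination of sums
`∑ a, s ^ d(a, b) * v ^ d(a, e)`, which factor over the coordinates as
`(1 + s v) ^ (k - d(b, e)) * (s + v) ^ d(b, e)`. For `v = 1 / (k - 1) = -t` the factor `s + v`
kills the two terms with `b` constant as soon as `e` is not constant, which leaves a value
independent of `e`; `v = 1` gives the normalization. Nonnegativity is `|t| ≤ 1`.
-/

open Finset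

section HammingSums

variable {ι R : Type*} [Fintype ι]

theorem pow_hammingDist_eq_prod [CommMonoid R] {β : Type*} [DecidableEq β] (t : R) (a b : ι → β) :
    t ^ hammingDist a b = ∏ i, if a i = b i then 1 else t := by
  rw [hammingDist, prod_ite, prod_const, prod_const, one_pow, one_mul]

theorem card_sub_hammingDist {β : Type*} [DecidableEq β] (a b : ι → β) :
    Fintype.card ι - hammingDist a b = #{i | a i = b i} := by
  have := card_filter_add_card_filter_not (s := univ) (fun i => a i = b i)
  simp only [hammingDist, ne_eq, card_univ] at this ⊢
  omega

theorem hammingDist_false_add_hammingDist_true (a : ι → Bool) :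
    hammingDist a (fun _ => false) + hammingDist a (fun _ => true) = Fintype.card ι := by
  have := card_filter_add_card_filter_not (s := univ) (fun i => a i = true)
  simpa only [hammingDist, ne_eq, Bool.not_eq_false, Bool.not_eq_true, card_univ, add_comm]
    using this

variable [DecidableEq ι]

theorem sum_pow_hammingDist_mul_pow_hammingDist [CommSemiring R] (s t : R) (b e : ι → Bool) :
    ∑ a, s ^ hammingDist a b * t ^ hammingDist a e =
      (1 + s * t) ^ (Fintype.card ι - hammingDist b e) * (s + t) ^ hammingDist b e := by
  have coord (i : ι) : ∑ x : Bool, (if x = b i then 1 else s) * (if x = e i then 1 else t) =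
      if b i = e i then 1 + s * t else s + t := by
    cases b i <;> cases e i <;> simp [add_comm]
  calc ∑ a, s ^ hammingDist a b * t ^ hammingDist a e
      = ∑ a : ι → Bool, ∏ i, (if a i = b i then 1 else s) * (if a i = e i then 1 else t) := by
        simp only [pow_hammingDist_eq_prod, prod_mul_distrib]
    _ = ∏ i, if b i = e i then 1 + s * t else s + t := by
        rw [← Fintype.prod_sum (fun i x => (if x = b i then 1 else s) * (if x = e i then 1 else t))]
        exact prod_congr rfl fun i _ => coord i
    _ = _ := by
        rw [prod_ite, prod_const, prod_const, card_sub_hammingDist, hammingDist]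

theorem sum_pow_hammingDist [CommSemiring R] (t : R) (e : ι → Bool) :
    ∑ a, t ^ hammingDist a e = (1 + t) ^ Fintype.card ι := by
  simpa using sum_pow_hammingDist_mul_pow_hammingDist 1 t e e

end HammingSums

section CubeWeight

variable {ι R : Type*} [Fintype ι]

/-- With `t = -1 / (k - 1)` this is `π a` without its normalizing factor `(k - 1) ^ k / D`. -/
def cubeWeight [CommRing R] (t : R) (a : ι → Bool) : R :=
  (1 - t ^ hammingDist a (fun _ => false)) * (1 - t ^ hammingDist a (fun _ => true))

theorem cubeWeight_eq [CommRing R] (t : R) (a : ι → Bool) :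
    cubeWeight t a = 1 - t ^ hammingDist a (fun _ => false) - t ^ hammingDist a (fun _ => true)
      + t ^ Fintype.card ι := by
  rw [cubeWeight, ← hammingDist_false_add_hammingDist_true a, pow_add]
  ring

theorem cubeWeight_nonneg [CommRing R] [LinearOrder R] [IsStrictOrderedRing R] {t : R}
    (ht : |t| ≤ 1) (a : ι → Bool) : 0 ≤ cubeWeight t a := by
  have pow_le_one (n : ℕ) : t ^ n ≤ 1 :=
    (le_abs_self _).trans ((abs_pow t n).trans_le (pow_le_one₀ (abs_nonneg t) ht))
  exact mul_nonneg (sub_nonneg.2 (pow_le_one _)) (sub_nonneg.2 (pow_le_one _))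

theorem cubeWeight_const [CommRing R] (t : R) (c : Bool) :
    cubeWeight t (fun _ : ι => c) = 0 := by
  cases c <;> simp [cubeWeight]

variable [DecidableEq ι]

theorem sum_filter_ne_const_eq_sum {M : Type*} [AddCommMonoid M]
    {f : (ι → Bool) → M} (h₀ : f (fun _ => false) = 0) (h₁ : f (fun _ => true) = 0) :
    ∑ a ∈ univ.filter (fun a => a ≠ (fun _ => false) ∧ a ≠ (fun _ => true)), f a = ∑ a, f a :=
  sum_filter_of_ne fun _ _ hfa => ⟨by rintro rfl; exact hfa h₀, by rintro rfl; exact hfa h₁⟩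

theorem sum_cubeWeight [CommRing R] (t : R) :
    ∑ a : ι → Bool, cubeWeight t a =
      2 ^ Fintype.card ι * (1 + t ^ Fintype.card ι) - 2 * (1 + t) ^ Fintype.card ι := by
  simp only [cubeWeight_eq, sum_add_distrib, sum_sub_distrib, sum_pow_hammingDist, sum_const,
    card_univ, Fintype.card_fun, Fintype.card_bool, nsmul_eq_mul]
  push_cast
  ring

theorem sum_cubeWeight_mul_neg_pow_hammingDist [CommRing R] (t : R) {e : ι → Bool}
    (he₀ : e ≠ fun _ => false) (he₁ : e ≠ fun _ => true) :
    ∑ a, cubeWeight t a * (-t) ^ hammingDist a e =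
      (1 - t) ^ Fintype.card ι * (1 + t ^ Fintype.card ι) := by
  have vanish {b : ι → Bool} (hb : b ≠ e) :
      ∑ a, t ^ hammingDist a b * (-t) ^ hammingDist a e = 0 := by
    rw [sum_pow_hammingDist_mul_pow_hammingDist, add_neg_cancel,
      zero_pow (hammingDist_ne_zero.2 hb), mul_zero]
  simp only [cubeWeight_eq, add_mul, sub_mul, one_mul, sum_add_distrib, sum_sub_distrib,
    vanish he₀.symm, vanish he₁.symm, ← mul_sum, sum_pow_hammingDist]
  ring

end CubeWeight

section Evaluation

variable {ι K : Type*} [Fintype ι] [DecidableEq ι] [Field K] {x : K}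

theorem sub_one_pow_mul_sum_cubeWeight (hx : x - 1 ≠ 0) :
    (x - 1) ^ Fintype.card ι * ∑ a : ι → Bool, cubeWeight (-1 / (x - 1)) a =
      (2 * x - 2) ^ Fintype.card ι - 2 * (x - 2) ^ Fintype.card ι + (-2) ^ Fintype.card ι := by
  set t := -1 / (x - 1) with ht
  have hxt : (x - 1) * t = -1 := by rw [ht]; field_simp
  rw [sum_cubeWeight]
  calc (x - 1) ^ Fintype.card ι * (2 ^ Fintype.card ι * (1 + t ^ Fintype.card ι)
        - 2 * (1 + t) ^ Fintype.card ι)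
      = ((x - 1) * 2) ^ Fintype.card ι - 2 * ((x - 1) * (1 + t)) ^ Fintype.card ι
        + ((x - 1) * (2 * t)) ^ Fintype.card ι := by simp only [mul_pow]; ring
    _ = _ := by
      rw [show (x - 1) * (1 + t) = x - 2 by linear_combination hxt,
        show (x - 1) * (2 * t) = -2 by linear_combination 2 * hxt]
      ring

theorem sub_one_pow_mul_sum_cubeWeight_mul_pow_hammingDist (hx : x - 1 ≠ 0) {e : ι → Bool}
    (he₀ : e ≠ fun _ => false) (he₁ : e ≠ fun _ => true) :
    (x - 1) ^ Fintype.card ι * ∑ a, cubeWeight (-1 / (x - 1)) a * (1 / (x - 1)) ^ hammingDist a e =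
      x ^ Fintype.card ι + (-x / (x - 1)) ^ Fintype.card ι := by
  set t := -1 / (x - 1) with ht
  have hxt : (x - 1) * t = -1 := by rw [ht]; field_simp
  rw [show 1 / (x - 1) = -t by rw [ht, neg_div, neg_neg],
    sum_cubeWeight_mul_neg_pow_hammingDist t he₀ he₁]
  calc (x - 1) ^ Fintype.card ι * ((1 - t) ^ Fintype.card ι * (1 + t ^ Fintype.card ι))
      = ((x - 1) * (1 - t)) ^ Fintype.card ι + ((x - 1) * (1 - t) * t) ^ Fintype.card ι := by
        simp only [mul_pow]; ring
    _ = _ := by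
      rw [show (x - 1) * (1 - t) = x by linear_combination -hxt, ht, neg_div]
      ring

end Evaluation

theorem two_mul_sub_two_pow_sub_two_mul_sub_two_pow_add_neg_two_pow_pos {x : ℝ} (hx : 3 ≤ x)
    {n : ℕ} (hn : 2 ≤ n) : 0 < (2 * x - 2) ^ n - 2 * (x - 2) ^ n + (-2) ^ n := by
  have hlt : (x - 2) ^ n < (x - 1) ^ n := pow_lt_pow_left₀ (by linarith) (by linarith) (by omega)
  have hge : 2 ^ n ≤ (x - 1) ^ n := pow_le_pow_left₀ (by norm_num) (by linarith) n
  have four_le : (4 : ℝ) ≤ 2 ^ n := by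
    calc (4 : ℝ) = 2 ^ 2 := by norm_num
      _ ≤ 2 ^ n := pow_le_pow_right₀ (by norm_num) hn
  have hneg : -2 ^ n ≤ (-2 : ℝ) ^ n := by
    simpa only [abs_pow, abs_neg, abs_two] using neg_abs_le ((-2 : ℝ) ^ n)
  rw [show 2 * x - 2 = 2 * (x - 1) by ring, mul_pow]
  have hpos : (0 : ℝ) ≤ (x - 1) ^ n := hge.trans' (by positivity)
  nlinarith [mul_le_mul_of_nonneg_right four_le hpos, pow_nonneg (by linarith : (0 : ℝ) ≤ x - 2) n]

theorem stmt_3 (k : ℕ) (hk : 3 ≤ k)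
    (A : Finset (Fin k → Bool))
    (hA : A = Finset.univ.filter fun a => a ≠ (fun _ => false) ∧ a ≠ (fun _ => true))
    (D lam : ℝ)
    (hD : D = (2 * (k : ℝ) - 2) ^ k - 2 * ((k : ℝ) - 2) ^ k + (-2) ^ k)
    (hlam : lam = ((k : ℝ) ^ k + (-(k : ℝ) / ((k : ℝ) - 1)) ^ k) / D)
    (π : (Fin k → Bool) → ℝ)
    (hπ : ∀ a, π a = ((k : ℝ) - 1) ^ k / D *
      (1 - (-1 / ((k : ℝ) - 1)) ^ (hammingDist a (fun _ => false))) *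
      (1 - (-1 / ((k : ℝ) - 1)) ^ (hammingDist a (fun _ => true)))) :
    (∑ a ∈ A, π a = 1) ∧ (∀ a ∈ A, 0 ≤ π a) ∧
      (∀ astar ∈ A, ∑ a ∈ A, π a * (1 / ((k : ℝ) - 1)) ^ (hammingDist a astar) = lam) := by
  have hk₃ : (3 : ℝ) ≤ k := by exact_mod_cast hk
  have hk₁ : (0 : ℝ) < k - 1 := by linarith
  have hDpos : 0 < D :=
    hD ▸ two_mul_sub_two_pow_sub_two_mul_sub_two_pow_add_neg_two_pow_pos hk₃ (by omega)
  have hπw (a : Fin k → Bool) :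
      π a = ((k : ℝ) - 1) ^ k / D * cubeWeight (-1 / ((k : ℝ) - 1)) a := by
    rw [hπ, cubeWeight, mul_assoc]
  have hπ₀ (c : Bool) : π (fun _ => c) = 0 := by rw [hπw, cubeWeight_const, mul_zero]
  subst hA
  refine ⟨?_, fun a _ => ?_, fun e he => ?_⟩
  · rw [sum_filter_ne_const_eq_sum (hπ₀ false) (hπ₀ true)]
    have hsum := sub_one_pow_mul_sum_cubeWeight (ι := Fin k) hk₁.ne'
    simp only [Fintype.card_fin, ← hD] at hsum
    simp only [hπw, ← mul_sum]
    rw [div_mul_eq_mul_div, hsum, div_self hDpos.ne']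
  · have ht : |-1 / ((k : ℝ) - 1)| ≤ 1 := by
      rw [abs_div, abs_neg, abs_one, abs_of_pos hk₁, div_le_one hk₁]
      linarith
    rw [hπw]
    exact mul_nonneg (div_nonneg (pow_nonneg hk₁.le k) hDpos.le) (cubeWeight_nonneg ht a)
  · simp only [mem_filter, mem_univ, true_and] at he
    have hsum := sub_one_pow_mul_sum_cubeWeight_mul_pow_hammingDist hk₁.ne' he.1 he.2
    rw [Fintype.card_fin] at hsum
    rw [sum_filter_ne_const_eq_sum (by rw [hπ₀, zero_mul]) (by rw [hπ₀, zero_mul])]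
    simp only [hπw, mul_assoc, ← mul_sum]
    rw [div_mul_eq_mul_div, hsum, hlam]
end

section
/- For real η ≥ 1 and integer i ≥ 2, define f_η(i) = (2^{i-1}(η + i - 2) - η + 1)/(2^i (i-1)). Then f_η(i) ≥ f_η(i+1) for all i ≥ 2. Consequently, for any integer k ≥ 2, the minimum of f_η(i) over 2 ≤ i ≤ k equals f_η(k). -/
/-!
Writing `n = i - 1`, one has `f_η(i) = 1/2 + (η - 1)/2 · (1 - 2⁻ⁿ)/n`, and `(1 - 2⁻ⁿ)/n` is the
average of the decreasing terms `2⁻¹, …, 2⁻ⁿ`, hence decreases in `n`.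
-/

noncomputable def fη (η : ℝ) (i : ℕ) : ℝ :=
  ((2 : ℝ) ^ (i - 1) * (η + (i : ℝ) - 2) - η + 1) / (2 ^ i * ((i : ℝ) - 1))

lemma one_sub_inv_two_pow_div_succ_le {n : ℕ} (hn : 1 ≤ n) :
    (1 - (2 : ℝ)⁻¹ ^ (n + 1)) / (n + 1 : ℕ) ≤ (1 - 2⁻¹ ^ n) / n := by
  have hpow : (n : ℝ) + 2 ≤ 2 ^ (n + 1) := by
    exact_mod_cast (Nat.lt_two_pow_self : n + 1 < 2 ^ (n + 1))
  rw [div_le_div_iff₀ (by positivity) (by positivity), inv_pow, inv_pow]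
  have h2 : (0 : ℝ) < 2 ^ n := by positivity
  rw [pow_succ] at hpow ⊢
  field_simp
  push_cast
  nlinarith

lemma fη_eq {η : ℝ} {i : ℕ} (hi : 2 ≤ i) :
    fη η i = 1 / 2 + (η - 1) / 2 * ((1 - (2 : ℝ)⁻¹ ^ (i - 1)) / (i - 1 : ℕ)) := by
  obtain ⟨n, rfl⟩ : ∃ n, i = n + 1 := ⟨i - 1, by omega⟩
  have hn : (n : ℝ) ≠ 0 := by exact_mod_cast (by omega : n ≠ 0)
  simp only [fη, Nat.add_sub_cancel, Nat.cast_add, Nat.cast_one, add_sub_cancel_right, inv_pow,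
    pow_succ]
  field_simp
  ring

lemma fη_succ_le {η : ℝ} (hη : 1 ≤ η) {i : ℕ} (hi : 2 ≤ i) : fη η (i + 1) ≤ fη η i := by
  obtain ⟨n, rfl⟩ : ∃ n, i = n + 1 := ⟨i - 1, by omega⟩
  rw [fη_eq hi, fη_eq (by omega)]
  simp only [Nat.add_sub_cancel]
  gcongr 1 / 2 + _ * ?_
  exact one_sub_inv_two_pow_div_succ_le (by omega)

theorem stmt_5 (η : ℝ) (hη : 1 ≤ η) (f : ℕ → ℝ)
    (hf : ∀ i, f i = ((2 : ℝ) ^ (i - 1) * (η + (i : ℝ) - 2) - η + 1) / (2 ^ i * ((i : ℝ) - 1))) :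
    (∀ i, 2 ≤ i → f (i + 1) ≤ f i) ∧
      (∀ k, 2 ≤ k → ∀ i, 2 ≤ i → i ≤ k → f k ≤ f i) := by
  obtain rfl : f = fη η := funext hf
  have hanti : AntitoneOn (fη η) (Set.Ici 2) :=
    antitoneOn_nat_Ici_of_succ_le fun i hi => fη_succ_le hη hi
  exact ⟨fun i hi => fη_succ_le hη hi,
    fun k hk i hi hik => hanti (Set.mem_Ici.2 hi) (Set.mem_Ici.2 hk) hik⟩
end

section
/- Let k ≥ 2 and let m_1, …, m_k be nonnegative reals, not all of m_2,…,m_k zero, with m = ∑_i m_i > 0 and η = (∑_i i·m_i)/m ≥ 1. Then (∑_{i=1}^k (1 - 2^{-i}) m_i)/m ≥ (2^{k-1}(η + k - 2) - η + 1)/(2^k (k-1)). -/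
lemma aux_pow_convex (n j : ℕ) (h : j ≤ n) : n * 2^j + j ≤ j * 2^n + n := by
  induction n with
  | zero => interval_cases j; simp
  | succ n ih =>
    rcases Nat.lt_or_ge j (n+1) with h' | h'
    · have hj : j ≤ n := Nat.lt_succ_iff.mp h'
      have H := ih hj
      have h2 : 2^j ≤ j * 2^n + 1 := by
        rcases Nat.eq_zero_or_pos j with rfl | hj1
        · simp
        · have hp : 2^j ≤ 2^n := Nat.pow_le_pow_right (by norm_num) hj
          have hm : 2^n ≤ j * 2^n := Nat.le_mul_of_pos_left _ hj1
          omega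
      have hps : 2^(n+1) = 2 * 2^n := by ring
      rw [hps]
      nlinarith
    · have : j = n+1 := le_antisymm h h'
      subst this
      exact le_refl _

lemma aux_coeff (k i : ℕ) (hk : 2 ≤ k) (h1 : 1 ≤ i) (hik : i ≤ k) :
    (2:ℝ)^(k-1) * i + ((k:ℝ)-2) * 2^(k-1) - i + 1 ≤
      2^k * ((k:ℝ)-1) * (1 - (1/2:ℝ)^i) := by
  have hn := aux_pow_convex (k-1) (k-i) (by omega)
  have hcast : ((k:ℝ)-1) * 2^(k-i) + ((k:ℝ)-(i:ℝ)) ≤ ((k:ℝ)-(i:ℝ)) * 2^(k-1) + ((k:ℝ)-1) := by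
    have h := (Nat.cast_le (α := ℝ)).mpr hn
    push_cast [Nat.cast_sub (show 1 ≤ k by omega), Nat.cast_sub hik] at h
    linarith
  have hqr : (2:ℝ)^(k-i) * 2^i = 2^k := by
    rw [← pow_add]; congr 1; omega
  have hp2 : (2:ℝ)^k = 2 * 2^(k-1) := by
    rw [← pow_succ']; congr 1; omega
  have hr : (0:ℝ) < 2^i := by positivity
  have hhalf : ((1/2:ℝ))^i = 1 / 2^i := by rw [div_pow, one_pow]
  have key : (2:ℝ)^k * (1 - (1/2:ℝ)^i) = 2^k - 2^(k-i) := by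
    rw [hhalf]
    field_simp
    linarith [hqr]
  have expand : (2:ℝ)^k * ((k:ℝ)-1) * (1 - (1/2:ℝ)^i)
      = ((k:ℝ)-1) * (2^k - 2^(k-i)) := by
    rw [mul_comm ((2:ℝ)^k) ((k:ℝ)-1), mul_assoc, key]
  rw [expand]
  have hik' : (i:ℝ) ≤ (k:ℝ) := Nat.cast_le.mpr hik
  nlinarith [hcast, hp2]

theorem stmt_6 (k : ℕ) (hk : 2 ≤ k) (m : ℕ → ℝ)
    (hnn : ∀ i ∈ Finset.Icc 1 k, 0 ≤ m i)
    (hne : ∃ i ∈ Finset.Icc 2 k, m i ≠ 0)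
    (M η : ℝ) (hM : M = ∑ i ∈ Finset.Icc 1 k, m i) (hMpos : 0 < M)
    (hη : η = (∑ i ∈ Finset.Icc 1 k, (i : ℝ) * m i) / M) (hη1 : 1 ≤ η) :
    ((2 : ℝ) ^ (k - 1) * (η + (k : ℝ) - 2) - η + 1) / (2 ^ k * ((k : ℝ) - 1)) ≤
      (∑ i ∈ Finset.Icc 1 k, (1 - (1 / 2 : ℝ) ^ i) * m i) / M := by
  set S1 := ∑ i ∈ Finset.Icc 1 k, (i : ℝ) * m i with hS1
  set S2 := ∑ i ∈ Finset.Icc 1 k, (1 - (1 / 2 : ℝ) ^ i) * m i with hS2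
  have hk1 : (1:ℝ) < (k:ℝ) := by exact_mod_cast (by omega : 1 < k)
  have hD : (0:ℝ) < 2 ^ k * ((k : ℝ) - 1) := by
    apply mul_pos (by positivity); linarith
  have hM0 : M ≠ 0 := ne_of_gt hMpos
  rw [div_le_div_iff₀ hD hMpos]
  subst hη
  have expand : ((2:ℝ)^(k-1) * (S1/M + (k:ℝ) - 2) - S1/M + 1) * M
      = 2^(k-1) * S1 + ((k:ℝ)-2) * 2^(k-1) * M - S1 + M := by
    field_simp; ring
  rw [expand]
  have key : ∑ i ∈ Finset.Icc 1 k,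
      ((2:ℝ)^(k-1) * ((i:ℝ) * m i) + ((k:ℝ)-2) * 2^(k-1) * m i - (i:ℝ) * m i + m i)
      ≤ ∑ i ∈ Finset.Icc 1 k, 2^k * ((k:ℝ)-1) * ((1 - (1/2:ℝ)^i) * m i) := by
    apply Finset.sum_le_sum
    intro i hi
    rw [Finset.mem_Icc] at hi
    have hmi := hnn i (Finset.mem_Icc.mpr hi)
    have hc := aux_coeff k i hk hi.1 hi.2
    nlinarith
  have e1 : ∑ i ∈ Finset.Icc 1 k,
      ((2:ℝ)^(k-1) * ((i:ℝ) * m i) + ((k:ℝ)-2) * 2^(k-1) * m i - (i:ℝ) * m i + m i)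
      = 2^(k-1) * S1 + ((k:ℝ)-2) * 2^(k-1) * M - S1 + M := by
    rw [Finset.sum_add_distrib, Finset.sum_sub_distrib, Finset.sum_add_distrib,
      ← Finset.mul_sum, ← Finset.mul_sum, ← hS1, ← hM]
  have e2 : ∑ i ∈ Finset.Icc 1 k, (2:ℝ)^k * ((k:ℝ)-1) * ((1 - (1/2:ℝ)^i) * m i)
      = S2 * (2^k * ((k:ℝ)-1)) := by
    rw [hS2, Finset.sum_mul]
    apply Finset.sum_congr rfl
    intro i _; ring
  rw [e1, e2] at key
  exact key
end

section
/- Let k ≥ 3 and let F be a k-CNF instance with no clauses of length 1, with m_i clauses of length i (2 ≤ i ≤ k), m = ∑ m_i > 0, and average clause length η = (∑ i·m_i)/m. If α* is an optimal NAE-assignment, then m ≤ s(α*)/ξ' where ξ' = (2^{k-1}(η + k - 4) - 2η + 4)/(2^k (k-2)). -/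
/-!
A uniformly random assignment fails to NAE-satisfy a clause on `i` distinct variables only when
all its literals take the same value, which happens with probability `2 / 2 ^ i`; a clause
containing two complementary literals is NAE-satisfied by every assignment. Averaging over the
assignments of the variables of `F` gives one NAE-satisfying `∑_C (1 - 2 / 2 ^ |C|)` clauses.
As `i ↦ 1 - 2 / 2 ^ i` is concave, on `[2, k]` it lies above its chord `1/2 + σ (i - 2)` with
`σ = (1/2 - 2 / 2 ^ k) / (k - 2)`; summing over the clauses gives `m (1/2 + σ (η - 2))`, and
`ξ' = 1/2 + σ (η - 2)`.
-/

open Finset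

theorem sum_map_eq_sum_countP_nsmul {α β M : Type*} [DecidableEq β] [AddCommMonoid M]
    (L : List α) (f : α → β) (g : β → M) {I : Finset β} (hI : ∀ a ∈ L, f a ∈ I) :
    (L.map fun a => g (f a)).sum = ∑ i ∈ I, L.countP (fun a => f a = i) • g i := by
  change (L.map (g ∘ f)).sum = _
  rw [← List.map_map, sum_list_map_count]
  refine sum_subset (fun i hi => ?_) (fun i _ hi => ?_) |>.trans (sum_congr rfl fun i _ => ?_)
  · obtain ⟨a, ha, rfl⟩ := List.mem_map.1 (List.mem_toFinset.1 hi)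
    exact hI a ha
  · simp [List.count_eq_zero.2 (List.mem_toFinset.not.1 hi)]
  · simp only [List.count, List.countP_map, Function.comp_def, beq_eq_decide]

theorem sum_countP_eq_sum_card_filter {α β : Type*} (P : Finset β) (p : β → α → Bool)
    (F : List α) : ∑ S ∈ P, F.countP (p S) = (F.map fun C => #{S ∈ P | p S C}).sum := by
  induction F with
  | nil => simp
  | cons C F ih => simp [List.countP_cons, sum_add_distrib, ih, add_comm]

noncomputable def naeChordSlope (k : ℕ) : ℝ := ((1 : ℝ) / 2 - 2 / 2 ^ k) / (k - 2)

theorem naeChordSlope_nonneg {k : ℕ} (hk : 2 ≤ k) : 0 ≤ naeChordSlope k := by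
  have h4 : (2 : ℝ) ^ 2 ≤ 2 ^ k := pow_le_pow_right₀ (by norm_num) hk
  refine div_nonneg ?_ (by rw [sub_nonneg]; exact_mod_cast hk)
  rw [sub_nonneg, div_le_iff₀ (by positivity)]
  linarith

theorem naeChordSlope_mul_add_le_one_sub_two_div_pow {i k : ℕ} (hi : 2 ≤ i) (hik : i ≤ k)
    (hk : 2 < k) : naeChordSlope k * (i - 2) + 1 / 2 ≤ 1 - 2 / 2 ^ i := by
  rcases hi.eq_or_lt with rfl | hi
  · norm_num
  have hi2 : (0 : ℝ) < i - 2 := by rw [sub_pos]; exact_mod_cast hi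
  have hk2 : (0 : ℝ) < k - 2 := by rw [sub_pos]; exact_mod_cast hk
  -- secant slopes from `2` of the convex function `x ↦ 2⁻¹ ^ x` increase
  have hsecant := (convexOn_rpow_left (b := 2⁻¹) (by norm_num)).secant_mono
    (a := 2) (x := i) (y := k) trivial trivial trivial (sub_ne_zero.1 hi2.ne') (sub_ne_zero.1 hk2.ne')
    (by exact_mod_cast hik)
  rw [Real.rpow_natCast, Real.rpow_natCast, Real.rpow_two, div_le_div_iff₀ hi2 hk2] at hsecant
  rw [naeChordSlope, div_mul_eq_mul_div, ← sub_le_sub_iff_right (1 / 2), add_sub_cancel_right,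
    div_le_iff₀ hk2]
  simp only [inv_pow, div_eq_mul_inv] at hsecant ⊢
  linarith

theorem div_eq_naeChordSlope_mul_add {k : ℕ} (hk : 2 < k) (η : ℝ) :
    ((2 : ℝ) ^ (k - 1) * (η + k - 4) - 2 * η + 4) / (2 ^ k * (k - 2))
      = naeChordSlope k * (η - 2) + 1 / 2 := by
  obtain ⟨j, rfl⟩ : ∃ j, k = j + 1 := ⟨k - 1, by omega⟩
  have hj : (j : ℝ) - 1 ≠ 0 := by rw [sub_ne_zero]; exact_mod_cast (by omega : j ≠ 1)
  rw [naeChordSlope, Nat.add_sub_cancel, pow_succ]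
  push_cast
  rw [show (j : ℝ) + 1 - 2 = j - 1 by ring]
  field_simp
  ring

theorem length_mul_naeChordSlope_le_sum {α : Type*} {k : ℕ} (hk : 2 < k) (F : List (Finset α))
    (hF : ∀ C ∈ F, 2 ≤ #C ∧ #C ≤ k) :
    F.length * (naeChordSlope k * ((F.map fun C => (#C : ℝ)).sum / F.length - 2) + 1 / 2)
      ≤ (F.map fun C => (1 : ℝ) - 2 / 2 ^ #C).sum := by
  set σ := naeChordSlope k
  have hsum : F.length * (σ * ((F.map fun C => (#C : ℝ)).sum / F.length - 2) + 1 / 2)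
      = (F.map fun C => σ * #C + (1 / 2 - 2 * σ)).sum := by
    rcases eq_or_ne F [] with rfl | hne
    · simp
    have hlen : (F.length : ℝ) ≠ 0 := by exact_mod_cast (List.length_pos_iff.2 hne).ne'
    simp only [List.sum_map_add, List.sum_map_mul_left, List.map_const', List.sum_replicate,
      nsmul_eq_mul]
    field_simp
    ring
  rw [hsum]
  refine List.sum_le_sum fun C hC => ?_
  have := naeChordSlope_mul_add_le_one_sub_two_div_pow (hF C hC).1 (hF C hC).2 hk
  linarith

section NAE

variable {ι : Type*}

def NAESat (α : ι → Bool) (C : Finset (ι × Bool)) : Prop :=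
  (∃ l ∈ C, α l.1 = l.2) ∧ (∃ l ∈ C, α l.1 ≠ l.2)

instance (α : ι → Bool) : DecidablePred (NAESat α) :=
  fun _ => inferInstanceAs (Decidable (_ ∧ _))

def naeCount (F : List (Finset (ι × Bool))) (α : ι → Bool) : ℕ :=
  F.countP fun C => decide (NAESat α C)

theorem naeSat_of_mem_of_mem {α : ι → Bool} {C : Finset (ι × Bool)} {x : ι}
    (ht : (x, true) ∈ C) (hf : (x, false) ∈ C) : NAESat α C := by
  cases h : α x
  · exact ⟨⟨_, hf, h⟩, ⟨_, ht, by simp [h]⟩⟩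
  · exact ⟨⟨_, ht, h⟩, ⟨_, hf, by simp [h]⟩⟩

variable [DecidableEq ι]

theorem card_filter_inter_eq_mul_le {V U : Finset ι} (T : Finset ι) (hUV : U ⊆ V) :
    #{S ∈ V.powerset | S ∩ U = T} * 2 ^ #U ≤ 2 ^ #V := by
  have hcard : #{S ∈ V.powerset | S ∩ U = T} ≤ #(V \ U).powerset := by
    refine card_le_card_of_injOn (· \ U) (fun S hS => ?_) (fun S₁ hS₁ S₂ hS₂ h => ?_)
    · simp only [coe_filter, mem_powerset, Set.mem_ofPred_eq, mem_coe] at hS ⊢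
      exact sdiff_subset_sdiff hS.1 le_rfl
    · simp only [coe_filter, mem_powerset, Set.mem_ofPred_eq] at hS₁ hS₂
      rw [← sdiff_union_inter S₁ U, ← sdiff_union_inter S₂ U, hS₁.2, hS₂.2]
      exact congrArg (· ∪ T) h
  calc #{S ∈ V.powerset | S ∩ U = T} * 2 ^ #U ≤ 2 ^ #(V \ U) * 2 ^ #U := by
        rw [← card_powerset (V \ U)]; gcongr
    _ = 2 ^ #V := by rw [← pow_add, card_sdiff_add_card_eq_card hUV]

theorem inter_image_fst_eq {C : Finset (ι × Bool)} {S : Finset ι} {f : Bool → Bool}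
    (h : ∀ l ∈ C, decide (l.1 ∈ S) = f l.2) :
    S ∩ C.image Prod.fst = {l ∈ C | f l.2}.image Prod.fst := by
  ext x
  simp only [mem_inter, mem_image, mem_filter]
  constructor
  · rintro ⟨hx, l, hl, rfl⟩
    exact ⟨l, ⟨hl, by simpa [hx] using (h l hl).symm⟩, rfl⟩
  · rintro ⟨l, ⟨hl, hfl⟩, rfl⟩
    exact ⟨by simpa [hfl] using h l hl, l, hl, rfl⟩

theorem card_filter_forall_literal_eq_mul_le {V : Finset ι} {C : Finset (ι × Bool)}
    (hC : C.image Prod.fst ⊆ V) (f : Bool → Bool) :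
    #{S ∈ V.powerset | ∀ l ∈ C, decide (l.1 ∈ S) = f l.2} * 2 ^ #(C.image Prod.fst)
      ≤ 2 ^ #V :=
  calc _ ≤ #{S ∈ V.powerset | S ∩ C.image Prod.fst = {l ∈ C | f l.2}.image Prod.fst}
        * 2 ^ #(C.image Prod.fst) := by
        gcongr with S
        exact inter_image_fst_eq
    _ ≤ 2 ^ #V := card_filter_inter_eq_mul_le _ hC

theorem card_filter_not_naeSat_mul_le {V : Finset ι} {C : Finset (ι × Bool)}
    (hC : C.image Prod.fst ⊆ V) :
    #{S ∈ V.powerset | ¬ NAESat (fun x => decide (x ∈ S)) C} * 2 ^ #C ≤ 2 * 2 ^ #V := by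
  by_cases hcomp : ∃ x, (x, true) ∈ C ∧ (x, false) ∈ C
  · obtain ⟨x, ht, hf⟩ := hcomp
    simp [naeSat_of_mem_of_mem ht hf]
  push Not at hcomp
  have hinj : Set.InjOn Prod.fst (C : Set (ι × Bool)) := by
    rintro ⟨x, b⟩ h ⟨_, b'⟩ h' rfl
    cases b <;> cases b' <;> simp_all
  rw [← card_image_of_injOn hinj]
  have hsub : {S ∈ V.powerset | ¬ NAESat (fun x => decide (x ∈ S)) C} ⊆
      {S ∈ V.powerset | ∀ l ∈ C, decide (l.1 ∈ S) = l.2} ∪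
      {S ∈ V.powerset | ∀ l ∈ C, decide (l.1 ∈ S) = !l.2} := by
    intro S hS
    rw [mem_filter, NAESat, not_and_or] at hS
    simp only [mem_union, mem_filter]
    push Not at hS
    obtain ⟨hS, h | h⟩ := hS
    · exact Or.inr ⟨hS, fun l hl => Bool.eq_not_iff.2 (h l hl)⟩
    · exact Or.inl ⟨hS, h⟩
  calc _ ≤ (#{S ∈ V.powerset | ∀ l ∈ C, decide (l.1 ∈ S) = l.2} +
        #{S ∈ V.powerset | ∀ l ∈ C, decide (l.1 ∈ S) = !l.2}) * 2 ^ #(C.image Prod.fst) := by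
        gcongr
        exact (card_le_card hsub).trans (card_union_le _ _)
    _ ≤ 2 ^ #V + 2 ^ #V := by
        rw [add_mul]
        exact add_le_add (card_filter_forall_literal_eq_mul_le hC id)
          (card_filter_forall_literal_eq_mul_le hC (!·))
    _ = 2 * 2 ^ #V := (two_mul _).symm

theorem two_pow_mul_le_card_filter_naeSat {V : Finset ι} {C : Finset (ι × Bool)}
    (hC : C.image Prod.fst ⊆ V) :
    (2 : ℝ) ^ #V * (1 - 2 / 2 ^ #C) ≤ #{S ∈ V.powerset | NAESat (fun x => decide (x ∈ S)) C} := by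
  have hsplit : (#{S ∈ V.powerset | NAESat (fun x => decide (x ∈ S)) C} : ℝ) +
      #{S ∈ V.powerset | ¬ NAESat (fun x => decide (x ∈ S)) C} = 2 ^ #V := by
    exact_mod_cast (card_filter_add_card_filter_not _).trans (card_powerset V)
  have hbad : (#{S ∈ V.powerset | ¬ NAESat (fun x => decide (x ∈ S)) C} : ℝ) ≤
      2 * 2 ^ #V / 2 ^ #C := by
    rw [le_div_iff₀ (by positivity)]
    exact_mod_cast card_filter_not_naeSat_mul_le hC
  have h2 : (2 : ℝ) ^ #V * (2 / 2 ^ #C) = 2 * 2 ^ #V / 2 ^ #C := by ring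
  rw [mul_one_sub, h2]
  linarith

theorem exists_sum_le_naeCount (F : List (Finset (ι × Bool))) :
    ∃ α : ι → Bool, (F.map fun C => (1 : ℝ) - 2 / 2 ^ #C).sum ≤ naeCount F α := by
  set V := F.toFinset.biUnion (·.image Prod.fst)
  have hV (C) (hC : C ∈ F) : C.image Prod.fst ⊆ V :=
    subset_biUnion_of_mem (·.image Prod.fst) (List.mem_toFinset.2 hC)
  have hsum : ∑ _S ∈ V.powerset, (F.map fun C => (1 : ℝ) - 2 / 2 ^ #C).sum ≤
      ∑ S ∈ V.powerset, (naeCount F (fun x => decide (x ∈ S)) : ℝ) :=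
    calc _ = (F.map fun C => (2 : ℝ) ^ #V * (1 - 2 / 2 ^ #C)).sum := by
          rw [sum_const, card_powerset, List.sum_map_mul_left, nsmul_eq_mul]
          push_cast; rfl
      _ ≤ (F.map fun C => (#{S ∈ V.powerset | NAESat (fun x => decide (x ∈ S)) C} : ℝ)).sum :=
          List.sum_le_sum fun C hC => two_pow_mul_le_card_filter_naeSat (hV C hC)
      _ = _ := by
          simp only [naeCount]
          rw [← Nat.cast_sum, sum_countP_eq_sum_card_filter, Nat.cast_list_sum, List.map_map]
          simp [Function.comp_def]
  obtain ⟨S, -, hS⟩ := exists_le_of_sum_le (powerset_nonempty V) hsum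
  exact ⟨_, hS⟩

end NAE

theorem stmt_8 (k : ℕ) (hk : 3 ≤ k) (F : List (Finset (ℕ × Bool)))
    (hF : ∀ C ∈ F, 2 ≤ C.card ∧ C.card ≤ k)
    (hm : 0 < F.length)
    (s : (ℕ → Bool) → ℕ)
    (hs : ∀ α, s α = F.countP fun C =>
      decide ((∃ l ∈ C, α l.1 = l.2) ∧ (∃ l ∈ C, α l.1 ≠ l.2)))
    (mc : ℕ → ℕ) (hmc : ∀ i, mc i = F.countP fun C => decide (C.card = i))
    (η : ℝ) (hη : η = (∑ i ∈ Finset.Icc 2 k, (i : ℝ) * mc i) / F.length)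
    (αopt : ℕ → Bool) (hopt : ∀ α, s α ≤ s αopt) :
    (F.length : ℝ) ≤ (s αopt : ℝ) /
      (((2 : ℝ) ^ (k - 1) * (η + (k : ℝ) - 4) - 2 * η + 4) / (2 ^ k * ((k : ℝ) - 2))) := by
  obtain ⟨α, hα⟩ := exists_sum_le_naeCount F
  have hαopt : (naeCount F α : ℝ) ≤ s αopt := by
    have : naeCount F α = s α := (hs α).symm
    exact_mod_cast this ▸ hopt α
  have hm' : (0 : ℝ) < F.length := by exact_mod_cast hm
  have hsize : ∑ i ∈ Icc 2 k, (i : ℝ) * mc i = (F.map fun C => (#C : ℝ)).sum := by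
    simpa only [hmc, nsmul_eq_mul, mul_comm] using (sum_map_eq_sum_countP_nsmul F card
      (fun i => (i : ℝ)) fun C hC => mem_Icc.2 (hF C hC)).symm
  have hη2 : 2 ≤ η := by
    rw [hη, hsize, le_div_iff₀ hm']
    simpa [mul_comm] using List.sum_le_sum fun C hC =>
      (show (2 : ℝ) ≤ #C by exact_mod_cast (hF C hC).1)
  have hξ : 0 < naeChordSlope k * (η - 2) + 1 / 2 := by
    nlinarith [naeChordSlope_nonneg (k := k) (by omega)]
  rw [div_eq_naeChordSlope_mul_add hk η, le_div_iff₀ hξ]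
  calc F.length * (naeChordSlope k * (η - 2) + 1 / 2)
      ≤ (F.map fun C => (1 : ℝ) - 2 / 2 ^ #C).sum := by
        rw [hη, hsize]
        exact length_mul_naeChordSlope_le_sum hk F hF
    _ ≤ naeCount F α := hα
    _ ≤ s αopt := hαopt
end

section
/- Let k ≥ 2 and let m_2,…,m_k and w_2,…,w_k be nonnegative reals with w_i ≤ m_i for all i, m = ∑ m_i > 0, w = ∑ w_i > 0, η = (∑ i·m_i)/m > 1, θ = (∑ i·w_i)/w > 1, and suppose w ≥ ∑_i (1 - 2^{-i}) m_i. Then 2/(θ-1) ≥ 1/(η-1) + (1/(k-1))·(2^{k-1}-1)/2^{k-1}. -/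
open Finset

lemma aux1 (a : ℕ) : (a:ℝ) * (1/2)^(a+1) ≤ 1 - (1/2)^a := by
  induction a with
  | zero => norm_num
  | succ n ih =>
    have hx : ((1:ℝ)/2)^n ≤ 1 := pow_le_one₀ (by norm_num) (by norm_num)
    have hx0 : (0:ℝ) ≤ ((1:ℝ)/2)^n := by positivity
    push_cast
    simp only [pow_succ] at ih ⊢
    nlinarith

lemma aux2 (a b : ℕ) (h : a ≤ b) :
    (a:ℝ) * (1 - (1/2)^b) ≤ (b:ℝ) * (1 - (1/2)^a) := by
  induction b, h using Nat.le_induction with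
  | base => exact le_refl _
  | succ b hb ih =>
    have h1 := aux1 a
    have h2 : ((1:ℝ)/2)^(b+1) ≤ (1/2)^(a+1) :=
      pow_le_pow_of_le_one (by norm_num) (by norm_num) (by omega)
    have h3 : (a:ℝ) * (1/2)^(b+1) ≤ (a:ℝ) * (1/2)^(a+1) :=
      mul_le_mul_of_nonneg_left h2 (by positivity)
    have hb0 : (0:ℝ) ≤ ((1:ℝ)/2)^b := by positivity
    push_cast
    simp only [pow_succ] at h1 h2 h3 ⊢
    nlinarith

theorem stmt_10 (k : ℕ) (hk : 2 ≤ k) (m w : ℕ → ℝ)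
    (hnn : ∀ i ∈ Finset.Icc 1 k, 0 ≤ m i ∧ 0 ≤ w i ∧ w i ≤ m i)
    (M W η θ : ℝ)
    (hM : M = ∑ i ∈ Finset.Icc 1 k, m i) (hMpos : 0 < M)
    (hW : W = ∑ i ∈ Finset.Icc 1 k, w i) (hWpos : 0 < W)
    (hη : η = (∑ i ∈ Finset.Icc 1 k, (i : ℝ) * m i) / M) (hη1 : 1 < η)
    (hθ : θ = (∑ i ∈ Finset.Icc 1 k, (i : ℝ) * w i) / W) (hθ1 : 1 < θ)
    (hWlb : ∑ i ∈ Finset.Icc 1 k, (1 - (1 / 2 : ℝ) ^ i) * m i ≤ W) :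
    1 / (η - 1) + (1 / ((k : ℝ) - 1)) * ((2 : ℝ) ^ (k - 1) - 1) / 2 ^ (k - 1) ≤
      2 / (θ - 1) := by
  set b := k - 1 with hbdef
  have hb1 : 1 ≤ b := by omega
  have hkR : (2:ℝ) ≤ (k:ℝ) := by exact_mod_cast hk
  have hK : (0:ℝ) < (k:ℝ) - 1 := by linarith
  set Sm := ∑ i ∈ Finset.Icc 1 k, (i : ℝ) * m i with hSm
  set Sw := ∑ i ∈ Finset.Icc 1 k, (i : ℝ) * w i with hSw
  have hMS : M < Sm := by
    rw [hη] at hη1; exact (one_lt_div hMpos).mp hη1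
  have hWS : W < Sw := by
    rw [hθ] at hθ1; exact (one_lt_div hWpos).mp hθ1
  have hA : 0 < Sm - M := sub_pos.mpr hMS
  have hB : 0 < Sw - W := sub_pos.mpr hWS
  have hBA : Sw - W ≤ Sm - M := by
    rw [hM, hW, hSm, hSw, ← Finset.sum_sub_distrib, ← Finset.sum_sub_distrib]
    apply Finset.sum_le_sum
    intro i hi
    obtain ⟨hm0, hw0, hwm⟩ := hnn i hi
    have hi1 : (1:ℝ) ≤ (i:ℝ) := by exact_mod_cast (Finset.mem_Icc.mp hi).1
    nlinarith
  set c : ℝ := (1 - (1/2:ℝ)^b) / ((k:ℝ) - 1) with hcdef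
  -- step 1 : sum (1 - (1/2)^(i-1)) m i ≤ 2W - M
  have hstep1 : ∑ i ∈ Finset.Icc 1 k, (1 - (1/2:ℝ)^(i-1)) * m i ≤ 2*W - M := by
    have he : ∑ i ∈ Finset.Icc 1 k, (1 - (1/2:ℝ)^(i-1)) * m i
        = 2 * (∑ i ∈ Finset.Icc 1 k, (1 - (1/2:ℝ)^i) * m i)
          - ∑ i ∈ Finset.Icc 1 k, m i := by
      rw [Finset.mul_sum, ← Finset.sum_sub_distrib]
      apply Finset.sum_congr rfl
      intro i hi
      have hi1 : 1 ≤ i := (Finset.mem_Icc.mp hi).1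
      have hp : ((1:ℝ)/2)^i = (1/2)^(i-1) * (1/2) := by
        rw [← pow_succ]; congr 1; omega
      rw [hp]; ring
    rw [he, hM]; linarith
  -- step 2 : c * (Sm - M) ≤ sum (1 - (1/2)^(i-1)) m i
  have hstep2 : c * (Sm - M) ≤ ∑ i ∈ Finset.Icc 1 k, (1 - (1/2:ℝ)^(i-1)) * m i := by
    have he : Sm - M = ∑ i ∈ Finset.Icc 1 k, ((i:ℝ) - 1) * m i := by
      rw [hSm, hM, ← Finset.sum_sub_distrib]
      exact Finset.sum_congr rfl fun i _ => by ring
    rw [he, Finset.mul_sum]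
    apply Finset.sum_le_sum
    intro i hi
    obtain ⟨hm0, _, _⟩ := hnn i hi
    obtain ⟨hi1, hik⟩ := Finset.mem_Icc.mp hi
    have hab : i - 1 ≤ b := by omega
    have h2 := aux2 (i-1) b hab
    have hci : ((i-1:ℕ):ℝ) = (i:ℝ) - 1 := by
      push_cast [hi1]; ring
    have hcb : ((b:ℕ):ℝ) = (k:ℝ) - 1 := by
      rw [hbdef]; push_cast [show 1 ≤ k by omega]; ring
    rw [hci, hcb] at h2
    have key : c * ((i:ℝ) - 1) ≤ 1 - (1/2:ℝ)^(i-1) := by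
      rw [hcdef, div_mul_eq_mul_div, div_le_iff₀ hK]
      nlinarith
    calc c * (((i:ℝ) - 1) * m i) = (c * ((i:ℝ) - 1)) * m i := by ring
      _ ≤ (1 - (1/2:ℝ)^(i-1)) * m i := mul_le_mul_of_nonneg_right key hm0
  have hkey : M / (Sm - M) + c ≤ 2 * W / (Sw - W) := by
    have e1 : 2 * W / (Sm - M) ≤ 2 * W / (Sw - W) := by
      apply div_le_div_of_nonneg_left (by linarith) hB hBA
    have e2 : c ≤ (2*W - M) / (Sm - M) := (le_div_iff₀ hA).mpr (by linarith)
    have e3 : (2*W - M) / (Sm - M) = 2*W/(Sm - M) - M/(Sm - M) := by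
      rw [← sub_div]
    linarith
  -- convert goal
  have g1 : 1 / (η - 1) = M / (Sm - M) := by
    rw [hη, show Sm / M - 1 = (Sm - M)/M by field_simp, one_div_div]
  have g2 : 2 / (θ - 1) = 2 * W / (Sw - W) := by
    rw [hθ, show Sw / W - 1 = (Sw - W)/W by field_simp, div_div_eq_mul_div]
  have g3 : (1 / ((k : ℝ) - 1)) * ((2 : ℝ) ^ b - 1) / 2 ^ b = c := by
    have h2b : (0:ℝ) < 2^b := by positivity
    have hpow : ((1:ℝ)/2)^b = 1 / 2^b := by rw [div_pow, one_pow]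
    rw [hcdef, hpow]
    rw [div_eq_div_iff (by positivity) hK.ne']
    field_simp
  rw [g1, g2, g3]
  exact hkey
end
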